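/- arXiv:1603.00946 — 2 statements merged into one kernel-verified Lean document; each statement's English description precedes it below -/
import Mathlib

section
/- Let N ≥ 1, let (A,Ω) be a relative fractal drum in ℝ^N, and let λ > 0. Write λS := {λx : x ∈ S}. Then: (i) \overline{dim}_B(λA, λΩ) = \overline{dim}_B(A,Ω); and (ii) for every s ∈ ℂ with Re s > \overline{dim}_B(A,Ω), the function x ↦ d(x, λA)^{s−N} is Lebesgue integrable on λΩ and ∫_{λΩ} d(x, λA)^{s−N} dx = λ^s · ∫_Ω d(x,A)^{s−N} dx, where λ^s is the principal complex power of the positive real λ. -/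
/-!
Scaling by `λ` multiplies distances to `λA` by `λ`, maps `A_t ∩ Ω` onto `(λA)_{λt} ∩ λΩ` and
multiplies volumes by `λ^N`, so every relative Minkowski content gets multiplied by `λ^r > 0`
and the box dimension is unchanged. The zeta integrals are then related by the linear change of
variables `x ↦ λx`, which produces the factor `λ^N · λ^(s-N) = λ^s`. Integrability above the
box dimension comes from the layer-cake formula: for `dim < r < Re s < N` the set where
`d(x,A)^(Re s - N) > u` lies in `A_t ∩ Ω` with `t = u^(-1/(N - Re s))`, of volume
`O(t^(N-r)) = O(u^(-(N-r)/(N-Re s)))`, which is integrable at infinity; for `Re s ≥ N` the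
integrand is bounded on `Ω ⊆ A_δ`.
-/

open MeasureTheory Metric Filter Set
open scoped ENNReal Topology Pointwise

/-- The upper `r`-dimensional relative Minkowski content of the pair `(A, Ω)` in `ℝ^N`. -/
noncomputable def upMink (N : ℕ) (A Ω : Set (EuclideanSpace ℝ (Fin N))) (r : ℝ) : ℝ≥0∞ :=
  Filter.limsup
    (fun t : ℝ => volume (Metric.thickening t A ∩ Ω) / ENNReal.ofReal (t ^ ((N : ℝ) - r)))
    (𝓝[>] (0 : ℝ))

/-- The upper relative box (Minkowski) dimension of `(A, Ω)`, as an extended real number. -/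
noncomputable def ubDim (N : ℕ) (A Ω : Set (EuclideanSpace ℝ (Fin N))) : EReal :=
  sInf {x : EReal | ∃ r : ℝ, x = (r : EReal) ∧ upMink N A Ω r = 0}

lemma map_mul_left_nhdsGT_zero {l : ℝ} (hl : 0 < l) : map (l * ·) (𝓝[>] (0 : ℝ)) = 𝓝[>] 0 := by
  have h := map_comap_of_surjective (f := (l * ·)) (mul_left_surjective₀ hl.ne') (𝓝[>] 0)
  rwa [comap_mulLeft_nhdsGT_zero hl] at h

lemma Complex.norm_ofReal_cpow_le {x : ℝ} (hx : 0 ≤ x) (y : ℂ) : ‖(x : ℂ) ^ y‖ ≤ x ^ y.re := by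
  simpa [Complex.arg_ofReal_of_nonneg hx, abs_of_nonneg hx] using Complex.norm_cpow_le x y

lemma integrable_rpow_neg_of_measure_lt_le {α : Type*} [MeasurableSpace α] {μ : Measure α}
    [IsFiniteMeasure μ] {f : α → ℝ} (hf : Measurable f) (hf0 : ∀ x, 0 ≤ f x) {a b : ℝ}
    (ha : 0 < a) (hab : a < b) (hμ : ∀ᶠ t in 𝓝[>] 0, μ {x | f x < t} ≤ ENNReal.ofReal (t ^ b)) :
    Integrable (fun x => f x ^ (-a)) μ := by
  have hg0 : ∀ x, 0 ≤ f x ^ (-a) := fun x => Real.rpow_nonneg (hf0 x) _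
  have hlevel : ∀ t > 0, {x | t < f x ^ (-a)} ⊆ {x | f x < t ^ (-a)⁻¹} := by
    intro t ht x hx
    rcases (hf0 x).eq_or_lt with h0 | hpos
    · have hx : t < f x ^ (-a) := hx
      rw [← h0, Real.zero_rpow (neg_ne_zero.2 ha.ne')] at hx
      exact absurd ht hx.not_gt
    · exact (Real.lt_rpow_inv_iff_of_neg hpos ht (neg_neg_of_pos ha)).2 hx
  have hthreshold : Tendsto (fun t : ℝ => t ^ (-a)⁻¹) atTop (𝓝[>] 0) := by
    rw [inv_neg]
    exact tendsto_nhdsWithin_iff.2 ⟨tendsto_rpow_neg_atTop (inv_pos.2 ha),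
      (eventually_gt_atTop 0).mono fun t ht => Real.rpow_pos_of_pos ht _⟩
  obtain ⟨M, hM⟩ := eventually_atTop.1 (hthreshold.eventually hμ)
  set M' := max M 1
  have hM' : 0 < M' := one_pos.trans_le (le_max_right _ _)
  have hexp : (-a)⁻¹ * b < -1 := by
    rw [inv_neg, neg_mul, neg_lt_neg_iff, inv_mul_eq_div, one_lt_div ha]
    exact hab
  have htail : ∀ t ∈ Ioi M', μ {x | t < f x ^ (-a)} ≤ ENNReal.ofReal (t ^ ((-a)⁻¹ * b)) := by
    intro t ht
    have ht0 : 0 < t := hM'.trans ht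
    calc μ {x | t < f x ^ (-a)} ≤ μ {x | f x < t ^ (-a)⁻¹} := measure_mono (hlevel t ht0)
      _ ≤ ENNReal.ofReal ((t ^ (-a)⁻¹) ^ b) := hM t ((le_max_left _ _).trans ht.le)
      _ = ENNReal.ofReal (t ^ ((-a)⁻¹ * b)) := by rw [Real.rpow_mul ht0.le]
  refine ⟨(hf.pow_const _).aestronglyMeasurable,
    (hasFiniteIntegral_iff_ofReal (ae_of_all _ hg0)).2 ?_⟩
  rw [lintegral_eq_lintegral_meas_lt μ (ae_of_all _ hg0) (hf.pow_const _).aemeasurable,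
    ← Ioc_union_Ioi_eq_Ioi hM'.le]
  refine (lintegral_union_le _ _ _).trans_lt (ENNReal.add_lt_top.2 ⟨?_, ?_⟩)
  · calc ∫⁻ t in Ioc 0 M', μ {x | t < f x ^ (-a)} ≤ ∫⁻ _ in Ioc 0 M', μ univ :=
          lintegral_mono fun t => measure_mono (subset_univ _)
      _ < ⊤ := by
          rw [setLIntegral_const]
          exact ENNReal.mul_lt_top (measure_lt_top _ _) (by simp)
  · calc ∫⁻ t in Ioi M', μ {x | t < f x ^ (-a)}
          ≤ ∫⁻ t in Ioi M', ENNReal.ofReal (t ^ ((-a)⁻¹ * b)) :=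
          setLIntegral_mono' measurableSet_Ioi htail
      _ < ⊤ := (integrableOn_Ioi_rpow_of_lt hexp hM').lintegral_lt_top

lemma measurable_cpow_infDist {X : Type*} [PseudoMetricSpace X] [MeasurableSpace X]
    [OpensMeasurableSpace X] (A : Set X) (w : ℂ) :
    Measurable fun x => (infDist x A : ℂ) ^ w :=
  (Complex.measurable_ofReal.comp (continuous_infDist_pt A).measurable).pow_const w

section Scaling

variable {E : Type*} [NormedAddCommGroup E] [NormedSpace ℝ E] {l : ℝ}

lemma infDist_smul_smul_of_pos (hl : 0 < l) (A : Set E) (x : E) :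
    infDist (l • x) (l • A) = l * infDist x A := by
  rw [infDist_smul₀ hl.ne', Real.norm_of_nonneg hl.le]

lemma thickening_mul_smul_of_pos (hl : 0 < l) (t : ℝ) (A : Set E) :
    thickening (l * t) (l • A) = l • thickening t A := by
  ext x
  rw [mem_smul_set_iff_inv_smul_mem₀ hl.ne', mem_thickening_iff_infEDist_lt,
    mem_thickening_iff_infEDist_lt]
  conv_lhs => rw [← smul_inv_smul₀ hl.ne' x]
  rw [infEDist_smul₀ hl.ne', ENNReal.ofReal_mul hl.le, ENNReal.smul_def, smul_eq_mul,
    ← ENNReal.ofReal_coe_nnreal, coe_nnnorm, Real.norm_of_nonneg hl.le]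
  exact ENNReal.mul_lt_mul_iff_right (by simpa using hl) ENNReal.ofReal_ne_top

lemma setIntegral_cpow_infDist_smul [FiniteDimensional ℝ E] [MeasurableSpace E] [BorelSpace E]
    (μ : Measure E) [μ.IsAddHaarMeasure] (hl : 0 < l) (A Ω : Set E) (s : ℂ) :
    ∫ x in l • Ω, (infDist x (l • A) : ℂ) ^ (s - Module.finrank ℝ E) ∂μ =
      (l : ℂ) ^ s * ∫ x in Ω, (infDist x A : ℂ) ^ (s - Module.finrank ℝ E) ∂μ := by
  set n := Module.finrank ℝ E
  have hpow : (l : ℂ) ^ s = (l : ℂ) ^ n * (l : ℂ) ^ (s - n) := by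
    rw [← Complex.cpow_natCast, ← Complex.cpow_add _ _ (by exact_mod_cast hl.ne'),
      add_sub_cancel]
  calc ∫ x in l • Ω, (infDist x (l • A) : ℂ) ^ (s - n) ∂μ
      = l ^ n • ∫ x in Ω, (infDist (l • x) (l • A) : ℂ) ^ (s - n) ∂μ := by
        rw [Measure.setIntegral_comp_smul_of_pos μ
          (fun x => (infDist x (l • A) : ℂ) ^ (s - n)) Ω hl, smul_inv_smul₀ (by positivity)]
    _ = l ^ n • ∫ x in Ω, (l : ℂ) ^ (s - n) * (infDist x A : ℂ) ^ (s - n) ∂μ := by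
        simp_rw [infDist_smul_smul_of_pos hl, Complex.ofReal_mul,
          Complex.mul_cpow_ofReal_nonneg hl.le infDist_nonneg]
    _ = (l : ℂ) ^ s * ∫ x in Ω, (infDist x A : ℂ) ^ (s - n) ∂μ := by
        rw [integral_const_mul, hpow, Complex.real_smul]
        push_cast
        ring

end Scaling

section RelativeFractalDrum

variable {N : ℕ} {l : ℝ}

lemma upMink_smul (hl : 0 < l) (A Ω : Set (EuclideanSpace ℝ (Fin N))) (r : ℝ) :
    upMink N (l • A) (l • Ω) r = ENNReal.ofReal (l ^ r) * upMink N A Ω r := by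
  have hratio : ∀ t > 0,
      volume (thickening (l * t) (l • A) ∩ l • Ω) / ENNReal.ofReal ((l * t) ^ ((N : ℝ) - r)) =
        ENNReal.ofReal (l ^ r) *
          (volume (thickening t A ∩ Ω) / ENNReal.ofReal (t ^ ((N : ℝ) - r))) := by
    intro t ht
    have hlN : ENNReal.ofReal (l ^ (N : ℝ)) / ENNReal.ofReal (l ^ ((N : ℝ) - r)) =
        ENNReal.ofReal (l ^ r) := by
      rw [← ENNReal.ofReal_div_of_pos (by positivity), ← Real.rpow_sub hl, sub_sub_cancel]
    rw [thickening_mul_smul_of_pos hl, ← smul_set_inter₀ hl.ne',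
      Measure.addHaar_smul_of_nonneg _ hl.le, finrank_euclideanSpace_fin, ← Real.rpow_natCast,
      Real.mul_rpow hl.le ht.le, ENNReal.ofReal_mul (by positivity),
      ENNReal.mul_div_mul_comm (Or.inr ENNReal.ofReal_ne_top) (Or.inl ENNReal.ofReal_ne_top), hlN]
  unfold upMink
  conv_lhs => rw [← map_mul_left_nhdsGT_zero hl, ← limsup_comp]
  exact (limsup_congr (eventually_mem_nhdsWithin.mono hratio)).trans
    (ENNReal.limsup_const_mul_of_ne_top ENNReal.ofReal_ne_top)

lemma ubDim_smul (hl : 0 < l) (A Ω : Set (EuclideanSpace ℝ (Fin N))) :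
    ubDim N (l • A) (l • Ω) = ubDim N A Ω := by
  simp only [ubDim, upMink_smul hl, mul_eq_zero, ENNReal.ofReal_eq_zero,
    not_le.2 (Real.rpow_pos_of_pos hl _), false_or]

variable {A Ω : Set (EuclideanSpace ℝ (Fin N))}

lemma eventually_volume_thickening_inter_le {r : ℝ} (hr : upMink N A Ω r = 0) :
    ∀ᶠ t in 𝓝[>] 0, volume (thickening t A ∩ Ω) ≤ ENNReal.ofReal (t ^ ((N : ℝ) - r)) := by
  filter_upwards [eventually_lt_of_limsup_lt (hr.trans_lt zero_lt_one), self_mem_nhdsWithin]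
    with t ht ht0
  have hpos : ENNReal.ofReal (t ^ ((N : ℝ) - r)) ≠ 0 := by
    simpa using Real.rpow_pos_of_pos ht0 _
  rw [ENNReal.div_lt_iff (Or.inl hpos) (Or.inl ENNReal.ofReal_ne_top), one_mul] at ht
  exact ht.le

lemma integrableOn_cpow_infDist_of_le_re (hA : A.Nonempty) (hΩv : volume Ω < ⊤) {δ : ℝ}
    (hΩδ : Ω ⊆ thickening δ A) {s : ℂ} (hsN : N ≤ s.re) :
    IntegrableOn (fun x => (infDist x A : ℂ) ^ (s - N)) Ω := by
  refine Measure.integrableOn_of_bounded (M := δ ^ (s.re - N)) hΩv.ne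
    (measurable_cpow_infDist A _).aestronglyMeasurable
    (ae_restrict_of_ae_restrict_of_subset hΩδ (ae_restrict_of_forall_mem
      isOpen_thickening.measurableSet fun x hx => ?_))
  have hxδ : infDist x A < δ := (mem_thickening_iff_infDist_lt hA).1 hx
  calc ‖(infDist x A : ℂ) ^ (s - N)‖ ≤ infDist x A ^ (s - N).re :=
        Complex.norm_ofReal_cpow_le infDist_nonneg _
    _ ≤ δ ^ (s.re - N) := by
        simpa using Real.rpow_le_rpow infDist_nonneg hxδ.le (sub_nonneg.2 hsN)

lemma integrableOn_cpow_infDist_of_re_lt (hA : A.Nonempty) (hΩv : volume Ω < ⊤) {s : ℂ}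
    (hs : ubDim N A Ω < s.re) (hsN : s.re < N) :
    IntegrableOn (fun x => (infDist x A : ℂ) ^ (s - N)) Ω := by
  obtain ⟨_, ⟨r, rfl, hr⟩, hrs⟩ := sInf_lt_iff.1 hs
  have hrs : r < s.re := EReal.coe_lt_coe_iff.1 hrs
  have : IsFiniteMeasure (volume.restrict Ω) := ⟨by simpa using hΩv⟩
  have hsublevel : ∀ᶠ t in 𝓝[>] 0, volume.restrict Ω {x | infDist x A < t} ≤
      ENNReal.ofReal (t ^ ((N : ℝ) - r)) := by
    filter_upwards [eventually_volume_thickening_inter_le hr] with t ht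
    rwa [Measure.restrict_apply (isOpen_lt (continuous_infDist_pt A)
      continuous_const).measurableSet, show {x | infDist x A < t} = thickening t A from
      ext fun _ => (mem_thickening_iff_infDist_lt hA).symm]
  have hmajorant := integrable_rpow_neg_of_measure_lt_le (continuous_infDist_pt A).measurable
    (fun _ => infDist_nonneg) (sub_pos.2 hsN) (by linarith) hsublevel
  refine hmajorant.mono' (measurable_cpow_infDist A _).aestronglyMeasurable
    (ae_of_all _ fun x => ?_)
  simpa using Complex.norm_ofReal_cpow_le infDist_nonneg (s - N)

lemma integrableOn_cpow_infDist (hA : A.Nonempty) (hΩv : volume Ω < ⊤) {δ : ℝ}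
    (hΩδ : Ω ⊆ thickening δ A) {s : ℂ} (hs : ubDim N A Ω < s.re) :
    IntegrableOn (fun x => (infDist x A : ℂ) ^ (s - N)) Ω := by
  rcases le_or_gt (N : ℝ) s.re with hsN | hsN
  · exact integrableOn_cpow_infDist_of_le_re hA hΩv hΩδ hsN
  · exact integrableOn_cpow_infDist_of_re_lt hA hΩv hs hsN

end RelativeFractalDrum

theorem stmt8_general (N : ℕ) (A Ω : Set (EuclideanSpace ℝ (Fin N)))
    (hA : A.Nonempty) (hΩv : volume Ω < ⊤)
    (hΩδ : ∃ δ > 0, Ω ⊆ Metric.thickening δ A)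
    (l : ℝ) (hl : 0 < l) :
    ubDim N (l • A) (l • Ω) = ubDim N A Ω ∧
    ∀ s : ℂ, ubDim N A Ω < (s.re : EReal) →
      MeasureTheory.IntegrableOn
          (fun x => (Metric.infDist x (l • A) : ℂ) ^ (s - (N : ℂ))) (l • Ω) volume ∧
        ∫ x in l • Ω, (Metric.infDist x (l • A) : ℂ) ^ (s - (N : ℂ))
          = (l : ℂ) ^ s * ∫ x in Ω, (Metric.infDist x A : ℂ) ^ (s - (N : ℂ)) := by
  obtain ⟨δ, -, hΩδ⟩ := hΩδ
  have hdim := ubDim_smul hl A Ω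
  have hvol : volume (l • Ω) < ⊤ := by
    rw [Measure.addHaar_smul_of_nonneg _ hl.le]
    exact ENNReal.mul_lt_top ENNReal.ofReal_lt_top hΩv
  have hδ : l • Ω ⊆ thickening (l * δ) (l • A) := by
    rw [thickening_mul_smul_of_pos hl]
    exact smul_set_mono hΩδ
  refine ⟨hdim, fun s hs => ⟨?_, ?_⟩⟩
  · exact integrableOn_cpow_infDist hA.smul_set hvol hδ (hdim ▸ hs)
  · simpa only [finrank_euclideanSpace_fin] using
      setIntegral_cpow_infDist_smul volume hl A Ω s

/-- Scaling property of the relative distance zeta function: for any RFD `(A, Ω)` in `ℝ^N`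
and `λ > 0`, the pair `(λA, λΩ)` has the same upper relative box dimension as `(A, Ω)`, and
for `Re s > dim_B(A, Ω)` one has `ζ_{λA,λΩ}(s) = λ^s · ζ_{A,Ω}(s)` (with the integrand
integrable on `λΩ`). -/
theorem stmt8 (N : ℕ) (hN : 1 ≤ N) (A Ω : Set (EuclideanSpace ℝ (Fin N)))
    (hA : A.Nonempty) (hΩo : IsOpen Ω) (hΩv : volume Ω < ⊤)
    (hΩδ : ∃ δ > 0, Ω ⊆ Metric.thickening δ A)
    (l : ℝ) (hl : 0 < l) :
    ubDim N (l • A) (l • Ω) = ubDim N A Ω ∧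
    ∀ s : ℂ, ubDim N A Ω < (s.re : EReal) →
      MeasureTheory.IntegrableOn
          (fun x => (Metric.infDist x (l • A) : ℂ) ^ (s - (N : ℂ))) (l • Ω) volume ∧
        ∫ x in l • Ω, (Metric.infDist x (l • A) : ℂ) ^ (s - (N : ℂ))
          = (l : ℂ) ^ s * ∫ x in Ω, (Metric.infDist x A : ℂ) ^ (s - (N : ℂ)) :=
  stmt8_general N A Ω hA hΩv hΩδ l hl
end

section
/- Let N ≥ 1, let (A,Ω) be a relative fractal drum in ℝ^N, and let δ > 0. Then for every s ∈ ℂ with Re s > \overline{dim}_B(A,Ω): the function t ↦ t^{s−N−1}|A_t ∩ Ω| is Lebesgue integrable on (0,δ), the function x ↦ d(x,A)^{s−N} is Lebesgue integrable on A_δ ∩ Ω, and the functional equation ∫_{A_δ ∩ Ω} d(x,A)^{s−N} dx = δ^{s−N}·|A_δ ∩ Ω| + (N−s)·∫_0^δ t^{s−N−1}|A_t ∩ Ω| dt holds (connecting the relative distance zeta function of (A, A_δ∩Ω) with the relative tube zeta function of (A,Ω)). -/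
/-!
For `0 < d ≤ δ`, and also for `d = 0` when `0 < re c`,
`d ^ c = δ ^ c - c * ∫_d^δ t ^ (c - 1) dt`. Put `d = d(x, A)`, integrate over `A_δ ∩ Ω` and swap
the integrals: since `{x | d(x, A) < t} = A_t`, this is the functional equation with `c = s - N`.
Fubini applies because `re s > dim_B(A, Ω)` gives `r < re s` with `|A_t ∩ Ω| ≤ t ^ (N - r)` near
`0`, so the tube integral converges absolutely. When `re c ≤ 0` that convergence forces
`{x ∈ Ω | d(x, A) = 0}` to be null, so `d = 0` is never needed.
-/

open MeasureTheory Metric Filter Set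
open scoped ENNReal Topology

lemma cpow_eq_sub_mul_integral_Ioo_cpow {x δ : ℝ} {c : ℂ} (hxδ : x ≤ δ)
    (hxc : 0 < x ∨ 0 < c.re) :
    (x : ℂ) ^ c = (δ : ℂ) ^ c - c * ∫ t in Ioo x δ, (t : ℂ) ^ (c - 1) := by
  rcases eq_or_ne c 0 with rfl | hc
  · simp
  have hpow : -1 < (c - 1).re ∨ c - 1 ≠ -1 ∧ (0 : ℝ) ∉ uIcc x δ := by
    rcases hxc with hx | hre
    · refine .inr ⟨fun h => hc (by linear_combination h), ?_⟩
      rw [uIcc_of_le hxδ]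
      exact fun h => hx.not_ge h.1
    · left
      simpa using hre
  rw [← integral_Ioc_eq_integral_Ioo, ← intervalIntegral.integral_of_le hxδ, integral_cpow hpow,
    sub_add_cancel, mul_div_cancel₀ _ hc, sub_sub_cancel]

lemma setLIntegral_Ioo_rpow_eq_top {δ σ : ℝ} (hδ : 0 < δ) (hσ : σ ≤ -1) :
    ∫⁻ t in Ioo 0 δ, ENNReal.ofReal (t ^ σ) = ∞ := by
  by_contra h
  have hint : IntegrableOn (fun t : ℝ => t ^ σ) (Ioo 0 δ) :=
    ⟨(measurable_id.pow_const σ).aestronglyMeasurable,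
      (hasFiniteIntegral_iff_ofReal (ae_restrict_of_forall_mem measurableSet_Ioo
        fun t ht => Real.rpow_nonneg ht.1.le σ)).2 (lt_top_iff_ne_top.2 h)⟩
  linarith [(intervalIntegral.integrableOn_Ioo_rpow_iff hδ).1 hint]

lemma setLIntegral_Ioo_rpow_mul_lt_top {φ : ℝ → ℝ≥0∞} {C : ℝ≥0∞} {a b δ : ℝ} (hC : C ≠ ∞)
    (hφC : ∀ t, φ t ≤ C) (hφ : ∀ᶠ t in 𝓝[>] 0, φ t ≤ ENNReal.ofReal (t ^ a))
    (hab : -1 < a + b) :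
    ∫⁻ t in Ioo 0 δ, ENNReal.ofReal (t ^ b) * φ t < ∞ := by
  obtain ⟨t₀, ht₀, hφt₀⟩ := mem_nhdsGT_iff_exists_Ioo_subset.1 hφ
  have ht₀ : (0 : ℝ) < t₀ := ht₀
  have hsplit : Ioo 0 δ ⊆ Ioo 0 t₀ ∪ Icc t₀ δ := fun t ht =>
    (lt_or_ge t t₀).imp (fun h => ⟨ht.1, h⟩) fun h => ⟨h, ht.2.le⟩
  refine (lintegral_mono_set hsplit).trans_lt ((lintegral_union_le _ _ _).trans_lt
    (ENNReal.add_lt_top.2 ⟨?_, ?_⟩))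
  · have hint := (intervalIntegral.integrableOn_Ioo_rpow_iff ht₀).2 (show -1 < a + b by linarith)
    refine (setLIntegral_mono' measurableSet_Ioo fun t ht => ?_).trans_lt hint.lintegral_lt_top
    calc ENNReal.ofReal (t ^ b) * φ t ≤ ENNReal.ofReal (t ^ b) * ENNReal.ofReal (t ^ a) := by
          gcongr
          exact hφt₀ ht
      _ = ENNReal.ofReal (t ^ (a + b)) := by
          rw [← ENNReal.ofReal_mul (Real.rpow_nonneg ht.1.le _), ← Real.rpow_add ht.1, add_comm]
  · have hcont : ContinuousOn (fun t : ℝ => t ^ b) (Icc t₀ δ) := fun t ht =>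
      (Real.continuousAt_rpow_const _ _ (.inl (ht₀.trans_le ht.1).ne')).continuousWithinAt
    calc ∫⁻ t in Icc t₀ δ, ENNReal.ofReal (t ^ b) * φ t
        ≤ ∫⁻ t in Icc t₀ δ, ENNReal.ofReal (t ^ b) * C := by gcongr with t; exact hφC t
      _ = (∫⁻ t in Icc t₀ δ, ENNReal.ofReal (t ^ b)) * C :=
          lintegral_mul_const _ (measurable_id.pow_const b).ennreal_ofReal
      _ < ∞ := ENNReal.mul_lt_top hcont.integrableOn_Icc.lintegral_lt_top hC.lt_top

section LayerCake

variable {α : Type*} [MeasurableSpace α] {μ : Measure α} {f : α → ℝ} {S : Set α} {δ : ℝ}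
  {c : ℂ}

lemma measure_setOf_le_zero_inter_eq_zero {σ : ℝ} (hδ : 0 < δ) (hσ : σ ≤ 0)
    (hint : ∫⁻ t in Ioo 0 δ, ENNReal.ofReal (t ^ (σ - 1)) * μ ({x | f x < t} ∩ S) < ∞) :
    μ ({x | f x ≤ 0} ∩ S) = 0 := by
  by_contra h
  refine hint.ne (eq_top_iff.2 ?_)
  calc ∞ = (∫⁻ t in Ioo 0 δ, ENNReal.ofReal (t ^ (σ - 1))) * μ ({x | f x ≤ 0} ∩ S) := by
        rw [setLIntegral_Ioo_rpow_eq_top hδ (by linarith), ENNReal.top_mul h]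
    _ = ∫⁻ t in Ioo 0 δ, ENNReal.ofReal (t ^ (σ - 1)) * μ ({x | f x ≤ 0} ∩ S) :=
        (lintegral_mul_const _ (measurable_id.pow_const _).ennreal_ofReal).symm
    _ ≤ _ := setLIntegral_mono' measurableSet_Ioo fun t ht =>
        mul_le_mul_right (measure_mono (inter_subset_inter_left _
          fun x (hx : f x ≤ 0) => hx.trans_lt ht.1)) _

variable [SFinite μ]

lemma integrable_indicator_cpow_prod (hf : Measurable f)
    (hint : ∫⁻ t in Ioo 0 δ, ENNReal.ofReal (t ^ (c.re - 1)) * μ ({x | f x < t} ∩ S) < ∞) :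
    Integrable ({p : α × ℝ | f p.1 < p.2}.indicator fun p => (p.2 : ℂ) ^ (c - 1))
      ((μ.restrict S).prod (volume.restrict (Ioo 0 δ))) := by
  have hmeas : Measurable ({p : α × ℝ | f p.1 < p.2}.indicator fun p => (p.2 : ℂ) ^ (c - 1)) :=
    ((Complex.measurable_ofReal.comp measurable_snd).pow_const _).indicator
      (measurableSet_lt (hf.comp measurable_fst) measurable_snd)
  refine ⟨hmeas.aestronglyMeasurable, ?_⟩
  rw [HasFiniteIntegral, lintegral_prod_symm _ hmeas.enorm.aemeasurable]
  refine (setLIntegral_congr_fun measurableSet_Ioo fun t ht => ?_).trans_lt hint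
  have hlt : MeasurableSet {x | f x < t} := measurableSet_lt hf measurable_const
  change ∫⁻ x, ‖{x | f x < t}.indicator (fun _ => (t : ℂ) ^ (c - 1)) x‖ₑ ∂μ.restrict S = _
  simp only [enorm_indicator_eq_indicator_enorm]
  rw [lintegral_indicator_const hlt, Measure.restrict_apply hlt, ← ofReal_norm,
    Complex.norm_cpow_eq_rpow_re_of_pos ht.1, Complex.sub_re, Complex.one_re]

theorem integral_cpow_eq_sub_mul_integral_measure_lt (hf : Measurable f) (hf₀ : ∀ x, 0 ≤ f x)
    (hSδ : S ⊆ {x | f x < δ}) (hS : μ S ≠ ∞) (hδ : 0 < δ)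
    (hint : ∫⁻ t in Ioo 0 δ, ENNReal.ofReal (t ^ (c.re - 1)) * μ ({x | f x < t} ∩ S) < ∞) :
    IntegrableOn (fun t : ℝ => (t : ℂ) ^ (c - 1) * ((μ ({x | f x < t} ∩ S)).toReal : ℂ))
        (Ioo 0 δ) ∧
      IntegrableOn (fun x => (f x : ℂ) ^ c) S μ ∧
      ∫ x in S, (f x : ℂ) ^ c ∂μ = (δ : ℂ) ^ c * ((μ S).toReal : ℂ)
        - c * ∫ t in Ioo 0 δ, (t : ℂ) ^ (c - 1) * ((μ ({x | f x < t} ∩ S)).toReal : ℂ) := by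
  set P := {p : α × ℝ | f p.1 < p.2}.indicator fun p => (p.2 : ℂ) ^ (c - 1)
  have hP : Integrable P ((μ.restrict S).prod (volume.restrict (Ioo 0 δ))) :=
    integrable_indicator_cpow_prod hf hint
  have hslice_t : ∀ t, ∫ x, P (x, t) ∂μ.restrict S
      = (t : ℂ) ^ (c - 1) * ((μ ({x | f x < t} ∩ S)).toReal : ℂ) := by
    intro t
    change ∫ x, {x | f x < t}.indicator (fun _ => (t : ℂ) ^ (c - 1)) x ∂μ.restrict S = _
    rw [integral_indicator_const _ (measurableSet_lt hf measurable_const),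
      measureReal_restrict_apply (measurableSet_lt hf measurable_const), Complex.real_smul,
      mul_comm, measureReal_def]
  have hslice_x : ∀ x, ∫ t in Ioo 0 δ, P (x, t) = ∫ t in Ioo (f x) δ, (t : ℂ) ^ (c - 1) := by
    intro x
    change ∫ t in Ioo 0 δ, (Ioi (f x)).indicator (fun t => (t : ℂ) ^ (c - 1)) t = _
    rw [setIntegral_indicator measurableSet_Ioi, Ioo_inter_Ioi, max_eq_right (hf₀ x)]
  have hlt : ∀ᵐ x ∂μ.restrict S, f x < δ :=
    ae_restrict_of_ae_restrict_of_subset hSδ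
      (ae_restrict_mem (measurableSet_lt hf measurable_const))
  have hpos : ∀ᵐ x ∂μ.restrict S, 0 < f x ∨ 0 < c.re := by
    rcases lt_or_ge 0 c.re with hre | hre
    · exact .of_forall fun _ => .inr hre
    refine measure_mono_null (fun x hx => ?_) ((Measure.restrict_apply
      (measurableSet_le hf measurable_const)).trans
        (measure_setOf_le_zero_inter_eq_zero hδ hre hint))
    exact not_lt.1 (not_or.1 hx).1
  have hpointwise : ∀ᵐ x ∂μ.restrict S,
      (f x : ℂ) ^ c = (δ : ℂ) ^ c - c * ∫ t in Ioo 0 δ, P (x, t) := by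
    filter_upwards [hlt, hpos] with x hxδ hx
    rw [hslice_x]
    exact cpow_eq_sub_mul_integral_Ioo_cpow hxδ.le hx
  have hinner : Integrable (fun x => ∫ t in Ioo 0 δ, P (x, t)) (μ.restrict S) :=
    hP.integral_prod_left
  have hconst : Integrable (fun _ => (δ : ℂ) ^ c) (μ.restrict S) := integrableOn_const hS
  refine ⟨hP.integral_prod_right.congr (ae_of_all _ hslice_t),
    (hconst.sub (hinner.const_mul c)).congr (hpointwise.mono fun x hx => hx.symm), ?_⟩
  calc ∫ x in S, (f x : ℂ) ^ c ∂μ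
      = ∫ x in S, ((δ : ℂ) ^ c - c * ∫ t in Ioo 0 δ, P (x, t)) ∂μ := integral_congr_ae hpointwise
    _ = (δ : ℂ) ^ c * ((μ S).toReal : ℂ) - c * ∫ x in S, (∫ t in Ioo 0 δ, P (x, t)) ∂μ := by
        rw [integral_sub hconst (hinner.const_mul c), integral_const,
          integral_const_mul, measureReal_restrict_apply_univ, Complex.real_smul, mul_comm,
          measureReal_def]
    _ = _ := by rw [integral_integral_swap (f := fun x t => P (x, t)) hP]; simp only [hslice_t]

end LayerCake

lemma setOf_infDist_lt_inter_thickening_inter {X : Type*} [PseudoMetricSpace X] {A Ω : Set X}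
    (hA : A.Nonempty) {t δ : ℝ} (htδ : t ≤ δ) :
    {x | infDist x A < t} ∩ (thickening δ A ∩ Ω) = thickening t A ∩ Ω := by
  have hthick : {x | infDist x A < t} = thickening t A :=
    ext fun x => (mem_thickening_iff_infDist_lt hA).symm
  rw [hthick, ← inter_assoc, inter_eq_left.2 (thickening_mono htδ A)]

theorem integral_infDist_cpow_eq {X : Type*} [PseudoMetricSpace X] [MeasurableSpace X]
    [OpensMeasurableSpace X] {μ : Measure X} [SFinite μ] {A Ω : Set X} (hA : A.Nonempty)
    {δ : ℝ} (hδ : 0 < δ) (hΩ : μ (thickening δ A ∩ Ω) ≠ ∞) {c : ℂ}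
    (hint : ∫⁻ t in Ioo 0 δ, ENNReal.ofReal (t ^ (c.re - 1)) * μ (thickening t A ∩ Ω) < ∞) :
    IntegrableOn (fun t : ℝ => (t : ℂ) ^ (c - 1) * ((μ (thickening t A ∩ Ω)).toReal : ℂ))
        (Ioo 0 δ) ∧
      IntegrableOn (fun x => (infDist x A : ℂ) ^ c) (thickening δ A ∩ Ω) μ ∧
      ∫ x in thickening δ A ∩ Ω, (infDist x A : ℂ) ^ c ∂μ
        = (δ : ℂ) ^ c * ((μ (thickening δ A ∩ Ω)).toReal : ℂ)
          - c * ∫ t in Ioo 0 δ, (t : ℂ) ^ (c - 1) * ((μ (thickening t A ∩ Ω)).toReal : ℂ) := by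
  have htube : ∀ t ∈ Ioo 0 δ,
      {x | infDist x A < t} ∩ (thickening δ A ∩ Ω) = thickening t A ∩ Ω :=
    fun t ht => setOf_infDist_lt_inter_thickening_inter hA ht.2.le
  have hsub : thickening δ A ∩ Ω ⊆ {x | infDist x A < δ} :=
    fun x hx => (mem_thickening_iff_infDist_lt hA).1 hx.1
  obtain ⟨htube_int, hdist_int, hdist_eq⟩ :=
    integral_cpow_eq_sub_mul_integral_measure_lt (continuous_infDist_pt A).measurable
      (fun _ => infDist_nonneg) hsub hΩ hδ
      ((setLIntegral_congr_fun measurableSet_Ioo fun t ht => by rw [htube t ht]).trans_lt hint)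
  refine ⟨htube_int.congr_fun (fun t ht => by simp only [htube t ht]) measurableSet_Ioo,
    hdist_int, ?_⟩
  rw [hdist_eq, setIntegral_congr_fun measurableSet_Ioo fun t ht => by rw [htube t ht]]

lemma exists_upMink_eq_zero_of_ubDim_lt {N : ℕ} {A Ω : Set (EuclideanSpace ℝ (Fin N))} {σ : ℝ}
    (h : ubDim N A Ω < σ) : ∃ r < σ, upMink N A Ω r = 0 := by
  obtain ⟨_, ⟨r, rfl, hr⟩, hrσ⟩ := sInf_lt_iff.1 h
  exact ⟨r, EReal.coe_lt_coe_iff.1 hrσ, hr⟩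

lemma eventually_volume_le_of_upMink_eq_zero {N : ℕ} {A Ω : Set (EuclideanSpace ℝ (Fin N))}
    {r : ℝ} (h : upMink N A Ω r = 0) :
    ∀ᶠ t in 𝓝[>] (0 : ℝ), volume (thickening t A ∩ Ω) ≤ ENNReal.ofReal (t ^ ((N : ℝ) - r)) := by
  have hlt : ∀ᶠ t in 𝓝[>] (0 : ℝ),
      volume (thickening t A ∩ Ω) / ENNReal.ofReal (t ^ ((N : ℝ) - r)) < 1 :=
    eventually_lt_of_limsup_lt (h.trans_lt zero_lt_one)
  filter_upwards [hlt, self_mem_nhdsWithin] with t ht (htpos : 0 < t)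
  have hpos : ENNReal.ofReal (t ^ ((N : ℝ) - r)) ≠ 0 :=
    (ENNReal.ofReal_pos.2 (Real.rpow_pos_of_pos htpos _)).ne'
  simpa using ((ENNReal.div_lt_iff (.inl hpos) (.inl ENNReal.ofReal_ne_top)).1 ht).le

theorem stmt10_general (N : ℕ) (A Ω : Set (EuclideanSpace ℝ (Fin N)))
    (hA : A.Nonempty) (hΩv : volume Ω < ⊤)
    (δ : ℝ) (hδ : 0 < δ)
    (s : ℂ) (hs : ubDim N A Ω < (s.re : EReal)) :
    MeasureTheory.IntegrableOn
        (fun t : ℝ => (t : ℂ) ^ (s - (N : ℂ) - 1) *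
          ((volume (Metric.thickening t A ∩ Ω)).toReal : ℂ)) (Set.Ioo 0 δ) volume ∧
    MeasureTheory.IntegrableOn
        (fun x => (Metric.infDist x A : ℂ) ^ (s - (N : ℂ)))
        (Metric.thickening δ A ∩ Ω) volume ∧
    ∫ x in Metric.thickening δ A ∩ Ω, (Metric.infDist x A : ℂ) ^ (s - (N : ℂ))
      = (δ : ℂ) ^ (s - (N : ℂ)) * ((volume (Metric.thickening δ A ∩ Ω)).toReal : ℂ)
        + ((N : ℂ) - s) * ∫ t in Set.Ioo (0 : ℝ) δ,
            (t : ℂ) ^ (s - (N : ℂ) - 1) *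
              ((volume (Metric.thickening t A ∩ Ω)).toReal : ℂ) := by
  obtain ⟨r, hrs, hr⟩ := exists_upMink_eq_zero_of_ubDim_lt hs
  have hint : ∫⁻ t in Ioo 0 δ, ENNReal.ofReal (t ^ ((s - N).re - 1))
      * volume (thickening t A ∩ Ω) < ∞ :=
    setLIntegral_Ioo_rpow_mul_lt_top hΩv.ne (fun _ => measure_mono inter_subset_right)
      (eventually_volume_le_of_upMink_eq_zero hr)
      (by simp only [Complex.sub_re, Complex.natCast_re]; linarith)
  obtain ⟨htube, hdist, heq⟩ := integral_infDist_cpow_eq hA hδ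
    ((measure_mono inter_subset_right).trans_lt hΩv).ne hint
  exact ⟨htube, hdist, heq.trans (by ring)⟩

/-- The functional equation connecting the relative distance zeta function of `(A, A_δ ∩ Ω)`
and the relative tube zeta function of `(A, Ω)`:
`ζ_{A, A_δ∩Ω}(s) = δ^{s-N}·|A_δ ∩ Ω| + (N - s)·∫_0^δ t^{s-N-1}|A_t ∩ Ω| dt`
for `Re s > dim_B(A, Ω)`, with both integrals (absolutely) convergent. -/
theorem stmt10 (N : ℕ) (hN : 1 ≤ N) (A Ω : Set (EuclideanSpace ℝ (Fin N)))
    (hA : A.Nonempty) (hΩo : IsOpen Ω) (hΩv : volume Ω < ⊤)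
    (hRFD : ∃ δ' > 0, Ω ⊆ Metric.thickening δ' A)
    (δ : ℝ) (hδ : 0 < δ)
    (s : ℂ) (hs : ubDim N A Ω < (s.re : EReal)) :
    MeasureTheory.IntegrableOn
        (fun t : ℝ => (t : ℂ) ^ (s - (N : ℂ) - 1) *
          ((volume (Metric.thickening t A ∩ Ω)).toReal : ℂ)) (Set.Ioo 0 δ) volume ∧
    MeasureTheory.IntegrableOn
        (fun x => (Metric.infDist x A : ℂ) ^ (s - (N : ℂ)))
        (Metric.thickening δ A ∩ Ω) volume ∧
    ∫ x in Metric.thickening δ A ∩ Ω, (Metric.infDist x A : ℂ) ^ (s - (N : ℂ))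
      = (δ : ℂ) ^ (s - (N : ℂ)) * ((volume (Metric.thickening δ A ∩ Ω)).toReal : ℂ)
        + ((N : ℂ) - s) * ∫ t in Set.Ioo (0 : ℝ) δ,
            (t : ℂ) ^ (s - (N : ℂ) - 1) *
              ((volume (Metric.thickening t A ∩ Ω)).toReal : ℂ) :=
  stmt10_general N A Ω hA hΩv δ hδ s hs
end
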